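/- arXiv:2106.12500 — 2 statements merged into one kernel-verified Lean document; each statement's English description precedes it below -/
import Mathlib

section
/- For all x, y ∈ W̃ one has the inclusions IxIyI ⊆ ⋃_{z ≤ y} IxzI and IxIyI ⊆ ⋃_{z ≤ x} IzyI, where the (disjoint) unions run over the elements z ∈ W̃ with z ≤ y, respectively z ≤ x, in the extended Bruhat order. -/
open scoped Pointwise

/-! ## Setting

`G` is a group with subgroups `I` and `N` such that `T := I ⊓ N` is normal in `N`, and
`W̃ := N/T` is presented via a surjective homomorphism `π : N →* W̃` whose kernel consists of
the elements of `N` lying in `I`.  `W̃ = W_aff ⋊ Ω` is an internal semidirect product, where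
`W_aff` carries a Coxeter system `cs` (with simple reflections indexed by `B`), the length
function `ℓ` of `cs` is extended to `W̃` by `ℓ (w * u) = ℓ w` for `w ∈ W_aff`, `u ∈ Ω`, and
the axioms (T0), (T3), (T4), (TΩ), (TS), (TF) hold. -/

/-- The double coset `I·n·I ⊆ G` attached to an element `w ∈ W̃ = N/T`, described as the union
of `I·n·I` over all representatives `n ∈ N` of `w` (these double cosets all coincide, since any
two representatives differ by an element of `T = I ⊓ N ⊆ I`). -/
def IwI {G : Type} [Group G] {W : Type} [Group W] (I : Subgroup G) {N : Subgroup G}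
    (π : N →* W) (w : W) : Set G :=
  {g : G | ∃ n : N, π n = w ∧ ∃ i ∈ I, ∃ j ∈ I, g = i * (n : G) * j}

/-- The basis element `i_w = 1_{IwI} : G → ℤ` of the Iwahori–Hecke ring. -/
noncomputable def iw {G : Type} [Group G] {W : Type} [Group W] (I : Subgroup G) {N : Subgroup G}
    (π : N →* W) (w : W) : G → ℤ :=
  (IwI I π w).indicator fun _ => (1 : ℤ)

/-- Convolution of `ℤ`-valued functions on `G` relative to `I`:
`(f ⋆ f')(x) = Σ_{yI ∈ G/I} f(y)·f'(y⁻¹x)` (the value of `f` at a left coset `yI` is computed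
at a chosen representative; this is independent of the choices when `f` is right `I`-invariant
and `f'` is left `I`-invariant). -/
noncomputable def hconv {G : Type} [Group G] (I : Subgroup G) (f f' : G → ℤ) : G → ℤ :=
  fun x => ∑ᶠ y : G ⧸ I, f (Quotient.out y) * f' ((Quotient.out y)⁻¹ * x)

/-- The left cosets of `I` contained in a (right `I`-stable) subset `A ⊆ G`, viewed as the
image of `A` in `G/I`. -/
def leftCosetsIn {G : Type} [Group G] (I : Subgroup G) (A : Set G) : Set (G ⧸ I) :=
  QuotientGroup.mk '' A

/-- A function `f : G → ℤ` belongs to the Iwahori–Hecke ring `H(G,I)` iff it is left and right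
`I`-invariant and vanishes outside finitely many double cosets of `I`. -/
def IsHeckeElt {G : Type} [Group G] {W : Type} [Group W] (I : Subgroup G) {N : Subgroup G}
    (π : N →* W) (f : G → ℤ) : Prop :=
  (∀ i ∈ I, ∀ g : G, f (i * g) = f g) ∧ (∀ i ∈ I, ∀ g : G, f (g * i) = f g) ∧
    {w : W | ∃ g ∈ IwI I π w, f g ≠ 0}.Finite

/-- The data and axioms of the Iwahori–Matsumoto setting. -/
structure IwahoriHeckeSetup (G W B : Type) [Group G] [Group W] (M : CoxeterMatrix B) where
  /-- the "Iwahori" subgroup -/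
  I : Subgroup G
  /-- the subgroup `N` -/
  N : Subgroup G
  /-- the quotient map `N → W̃ = N/T`, `T = I ∩ N` -/
  π : N →* W
  π_surjective : Function.Surjective π
  /-- the kernel of `π` is exactly `T = I ∩ N` (so `T` is normal in `N` and `W̃ = N/T`) -/
  π_ker : ∀ n : N, π n = 1 ↔ (n : G) ∈ I
  /-- the normal subgroup `W_aff` of `W̃` -/
  Waff : Subgroup W
  /-- the subgroup `Ω` of `W̃` -/
  Om : Subgroup W
  Waff_normal : Waff.Normal
  /-- `W̃ = W_aff · Ω` -/
  sd_prod : ∀ w : W, ∃ wa ∈ Waff, ∃ u ∈ Om, w = wa * u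
  /-- `W_aff ∩ Ω = 1` -/
  sd_disj : Waff ⊓ Om = ⊥
  /-- the Coxeter system `(W_aff, S)`, `S = {simple b | b : B}` -/
  cs : CoxeterSystem M Waff
  /-- the length function of `(W_aff, S)`, extended to `W̃` -/
  len : W → ℕ
  len_spec : ∀ (wa : Waff) (u : Om), len ((wa : W) * (u : W)) = cs.length wa
  /-- `q w` = the number of left cosets of `I` contained in `IwI` -/
  q : W → ℕ
  /-- (T0): `G` is covered by the double cosets `IwI`, `w ∈ W̃` ... -/
  T0_cover : ∀ g : G, ∃ w : W, g ∈ IwI I π w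
  /-- (T0): ... and distinct double cosets are disjoint -/
  T0_disjoint : ∀ w w' : W, w ≠ w' → Disjoint (IwI I π w) (IwI I π w')
  /-- (T3): `sIw ⊆ IwI ∪ IswI` for all `s ∈ S`, `w ∈ W̃` -/
  T3 : ∀ (b : B) (w : W) (ns nw : N), π ns = (cs.simple b : W) → π nw = w →
      ∀ i ∈ I, (ns : G) * i * (nw : G) ∈ IwI I π w ∪ IwI I π ((cs.simple b : W) * w)
  /-- (T4): `sIs ⊄ I` for all `s ∈ S` -/
  T4 : ∀ (b : B) (ns ns' : N), π ns = (cs.simple b : W) → π ns' = (cs.simple b : W) →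
      ¬ (∀ i ∈ I, (ns : G) * i * (ns' : G) ∈ I)
  /-- (TΩ): representatives in `N` of elements of `Ω` normalize `I` -/
  TOm : ∀ n : N, π n ∈ Om → ∀ i ∈ I, (n : G) * i * (n : G)⁻¹ ∈ I
  /-- (TS): `uSu⁻¹ = S` for all `u ∈ Ω` -/
  TS : ∀ u ∈ Om, ∀ b : B, ∃ b' : B, u * (cs.simple b : W) * u⁻¹ = (cs.simple b' : W)
  /-- (TF): every double coset `IwI` is a finite union of left cosets of `I`, and `q w` is
  their number -/
  TF : ∀ w : W, (leftCosetsIn I (IwI I π w)).Finite ∧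
      q w = (leftCosetsIn I (IwI I π w)).ncard

/-- The Bruhat order on the Coxeter group: `z ≤ y` iff `z` is the product of a subword
(in order) of some reduced word for `y`. -/
def bruhatLE {B : Type} {W' : Type} [Group W'] {M : CoxeterMatrix B}
    (cs : CoxeterSystem M W') (z y : W') : Prop :=
  ∃ ω : List B, cs.wordProd ω = y ∧ ω.length = cs.length y ∧
    ∃ ω' : List B, ω'.Sublist ω ∧ cs.wordProd ω' = z

/-- The extension of the Bruhat order to `W̃ = W_aff ⋊ Ω`: `z·u ≤ y·u'` (for
`z, y ∈ W_aff`, `u, u' ∈ Ω`) iff `z ≤ y` and `u = u'`. -/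
def extBruhatLE {G W B : Type} [Group G] [Group W] {M : CoxeterMatrix B}
    (D : IwahoriHeckeSetup G W B M) (z y : W) : Prop :=
  ∃ (za ya : D.Waff) (u : D.Om), z = (za : W) * (u : W) ∧ y = (ya : W) * (u : W) ∧
    bruhatLE D.cs za ya

/-! Write `x = s₁⋯sₖ·u` with `s₁⋯sₖ` reduced and `u ∈ Ω`. Then `IxI ⊆ Is₁I⋯IsₖI·IuI`,
the factor `IuI` moves past `IyI` by (TΩ), and by (T3) each `IsᵢI` is either absorbed or
multiplies through, so `IxIyI` is covered by the `IzyI` with `z = s_{i₁}⋯s_{iⱼ}·u` running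
over subwords: these are Bruhat-below `x`. The other inclusion is the mirror image under
`g ↦ g⁻¹`, which sends `IwI` to `Iw⁻¹I` and reverses words. -/

section DoubleCosets

variable {G W : Type} [Group G] [Group W] {I N : Subgroup G} {π : N →* W}

lemma mul_mem_IwI_mul {w : W} {g i j : G} (hi : i ∈ I) (hg : g ∈ IwI I π w) (hj : j ∈ I) :
    i * g * j ∈ IwI I π w := by
  obtain ⟨n, hn, a, ha, b, hb, rfl⟩ := hg
  exact ⟨n, hn, i * a, mul_mem hi ha, b * j, mul_mem hb hj, by group⟩

lemma inv_IwI (w : W) : (IwI I π w)⁻¹ = IwI I π w⁻¹ := by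
  have key : ∀ v : W, (IwI I π v)⁻¹ ⊆ IwI I π v⁻¹ := by
    rintro v g ⟨n, hn, a, ha, b, hb, hg⟩
    refine ⟨n⁻¹, by rw [map_inv, hn], b⁻¹, inv_mem hb, a⁻¹, inv_mem ha, ?_⟩
    rw [← inv_inv g, hg]
    push_cast
    group
  refine (key w).antisymm ?_
  simpa using Set.inv_subset_inv.mpr (key w⁻¹)

lemma IwI_mul_IwI_eq_inv (a b : W) :
    IwI I π a * IwI I π b = (IwI I π b⁻¹ * IwI I π a⁻¹)⁻¹ := by
  rw [mul_inv_rev, inv_IwI, inv_IwI, inv_inv, inv_inv]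

lemma IwI_mul_subset (hπ : Function.Surjective π) (a b : W) :
    IwI I π (a * b) ⊆ IwI I π a * IwI I π b := by
  rintro g ⟨n, hn, i, hi, j, hj, rfl⟩
  obtain ⟨m, hm⟩ := hπ a
  refine ⟨i * m, ⟨m, hm, i, hi, 1, one_mem I, by group⟩, (m⁻¹ * n : N) * j,
    ⟨m⁻¹ * n, by rw [map_mul, map_inv, hm, hn, inv_mul_cancel_left], 1, one_mem I, j, hj,
      by group⟩, ?_⟩
  push_cast
  group

lemma IwI_mul_IwI_subset_of_normalizes {u : W}
    (hu : ∀ n : N, π n = u → ∀ i ∈ I, (n : G) * i * (n : G)⁻¹ ∈ I) (y : W) :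
    IwI I π u * IwI I π y ⊆ IwI I π (u * y) := by
  rintro _ ⟨_, ⟨n, hn, i, hi, j, hj, rfl⟩, _, ⟨m, hm, i', hi', j', hj', rfl⟩, rfl⟩
  refine ⟨n * m, by rw [map_mul, hn, hm], i * ((n : G) * (j * i') * (n : G)⁻¹),
    mul_mem hi (hu n hn _ (mul_mem hj hi')), j', hj', ?_⟩
  push_cast
  group

end DoubleCosets

lemma bruhatLE_wordProd_of_sublist {B W' : Type} [Group W'] {M : CoxeterMatrix B}
    {cs : CoxeterSystem M W'} {ω ω' : List B} (hω : cs.IsReduced ω) (h : ω'.Sublist ω) :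
    bruhatLE cs (cs.wordProd ω') (cs.wordProd ω) :=
  ⟨ω, rfl, hω.symm, ω', h, rfl⟩

namespace IwahoriHeckeSetup

variable {G W B : Type} [Group G] [Group W] {M : CoxeterMatrix B}
  (D : IwahoriHeckeSetup G W B M)

lemma exists_isReduced_mul_mem_Om (w : W) :
    ∃ ω : List B, D.cs.IsReduced ω ∧ ∃ u ∈ D.Om, w = D.cs.wordProd ω * u := by
  obtain ⟨_, hwa, u, hu, rfl⟩ := D.sd_prod w
  obtain ⟨ω, hω, hwω⟩ := D.cs.exists_isReduced ⟨_, hwa⟩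
  exact ⟨ω, hω, u, hu, by rw [← hwω]⟩

lemma IwI_simple_mul_subset (b : B) (w : W) :
    IwI D.I D.π (D.cs.simple b) * IwI D.I D.π w ⊆
      IwI D.I D.π w ∪ IwI D.I D.π (D.cs.simple b * w) := by
  rintro _ ⟨_, ⟨n, hn, i, hi, j, hj, rfl⟩, _, ⟨m, hm, i', hi', j', hj', rfl⟩, rfl⟩
  have hT3 := D.T3 b w n m hn hm (j * i') (mul_mem hj hi')
  show i * n * j * (i' * m * j') ∈ _
  rw [show i * n * j * (i' * m * j') = i * (n * (j * i') * m) * j' by group]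
  exact hT3.imp (mul_mem_IwI_mul hi · hj') (mul_mem_IwI_mul hi · hj')

lemma IwI_mul_IwI_subset_of_mem_Om_left {u : W} (hu : u ∈ D.Om) (y : W) :
    IwI D.I D.π u * IwI D.I D.π y ⊆ IwI D.I D.π (u * y) :=
  IwI_mul_IwI_subset_of_normalizes (fun n hn => D.TOm n (hn ▸ hu)) y

lemma IwI_mul_IwI_subset_of_mem_Om_right {u : W} (hu : u ∈ D.Om) (x : W) :
    IwI D.I D.π x * IwI D.I D.π u ⊆ IwI D.I D.π (x * u) := by
  rw [IwI_mul_IwI_eq_inv, Set.inv_subset, inv_IwI, mul_inv_rev]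
  exact D.IwI_mul_IwI_subset_of_mem_Om_left (inv_mem hu) x⁻¹

lemma IwI_wordProd_mul_subset (ω : List B) (y : W) :
    IwI D.I D.π (D.cs.wordProd ω) * IwI D.I D.π y ⊆
      ⋃ ω' ∈ {ω' : List B | ω'.Sublist ω}, IwI D.I D.π (D.cs.wordProd ω' * y) := by
  induction ω with
  | nil =>
    refine Set.subset_iUnion₂_of_subset [] List.Sublist.slnil ?_
    exact D.IwI_mul_IwI_subset_of_mem_Om_left (D.cs.wordProd_nil ▸ one_mem D.Om) y
  | cons b ω ih =>
    have hsplit : IwI D.I D.π (D.cs.wordProd (b :: ω)) ⊆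
        IwI D.I D.π (D.cs.simple b) * IwI D.I D.π (D.cs.wordProd ω) := by
      rw [D.cs.wordProd_cons, Subgroup.coe_mul]
      exact IwI_mul_subset D.π_surjective _ _
    calc IwI D.I D.π (D.cs.wordProd (b :: ω)) * IwI D.I D.π y
        ⊆ IwI D.I D.π (D.cs.simple b) * (IwI D.I D.π (D.cs.wordProd ω) * IwI D.I D.π y) := by
          rw [← mul_assoc]; exact Set.mul_subset_mul_right hsplit
      _ ⊆ _ := Set.mul_subset_mul_left ih
      _ = ⋃ ω' ∈ {ω' : List B | ω'.Sublist ω},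
            IwI D.I D.π (D.cs.simple b) * IwI D.I D.π (D.cs.wordProd ω' * y) :=
          Set.mul_iUnion₂ _ _
      _ ⊆ _ := by
        refine Set.iUnion₂_subset fun ω' h => (D.IwI_simple_mul_subset b _).trans ?_
        refine Set.union_subset (Set.subset_iUnion₂_of_subset ω' (h.cons b) subset_rfl) ?_
        refine Set.subset_iUnion₂_of_subset (b :: ω') (h.cons_cons b) ?_
        rw [D.cs.wordProd_cons, Subgroup.coe_mul, mul_assoc]

lemma mul_IwI_wordProd_subset (ω : List B) (x : W) :
    IwI D.I D.π x * IwI D.I D.π (D.cs.wordProd ω) ⊆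
      ⋃ ω' ∈ {ω' : List B | ω'.Sublist ω}, IwI D.I D.π (x * D.cs.wordProd ω') := by
  rw [IwI_mul_IwI_eq_inv, Set.inv_subset]
  simp only [Set.iUnion_inv]
  have := D.IwI_wordProd_mul_subset ω.reverse x⁻¹
  rw [D.cs.wordProd_reverse, Subgroup.coe_inv] at this
  refine this.trans (Set.iUnion₂_subset fun ω' h => ?_)
  refine Set.subset_iUnion₂_of_subset ω'.reverse (List.sublist_reverse_iff.mp h) ?_
  rw [inv_IwI, D.cs.wordProd_reverse, Subgroup.coe_inv, mul_inv_rev, inv_inv]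

lemma IwI_mul_IwI_subset_biUnion_extBruhatLE_right (x : W) {ω : List B}
    (hω : D.cs.IsReduced ω) {u : W} (hu : u ∈ D.Om) :
    IwI D.I D.π x * IwI D.I D.π (D.cs.wordProd ω * u) ⊆
      ⋃ z ∈ {z : W | extBruhatLE D z (D.cs.wordProd ω * u)}, IwI D.I D.π (x * z) := by
  calc IwI D.I D.π x * IwI D.I D.π (D.cs.wordProd ω * u)
      ⊆ IwI D.I D.π x * IwI D.I D.π (D.cs.wordProd ω) * IwI D.I D.π u := by
        rw [mul_assoc]; exact Set.mul_subset_mul_left (IwI_mul_subset D.π_surjective _ _)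
    _ ⊆ _ := Set.mul_subset_mul_right (D.mul_IwI_wordProd_subset ω x)
    _ = ⋃ ω' ∈ {ω' : List B | ω'.Sublist ω},
          IwI D.I D.π (x * D.cs.wordProd ω') * IwI D.I D.π u := Set.iUnion₂_mul _ _
    _ ⊆ _ := Set.iUnion₂_subset fun ω' h => Set.subset_iUnion₂_of_subset _
          ⟨D.cs.wordProd ω', _, ⟨u, hu⟩, rfl, rfl, bruhatLE_wordProd_of_sublist hω h⟩
          (by rw [← mul_assoc]; exact D.IwI_mul_IwI_subset_of_mem_Om_right hu _)

lemma IwI_mul_IwI_subset_biUnion_extBruhatLE_left {ω : List B} (hω : D.cs.IsReduced ω)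
    {u : W} (hu : u ∈ D.Om) (y : W) :
    IwI D.I D.π (D.cs.wordProd ω * u) * IwI D.I D.π y ⊆
      ⋃ z ∈ {z : W | extBruhatLE D z (D.cs.wordProd ω * u)}, IwI D.I D.π (z * y) := by
  calc IwI D.I D.π (D.cs.wordProd ω * u) * IwI D.I D.π y
      ⊆ IwI D.I D.π (D.cs.wordProd ω) * (IwI D.I D.π u * IwI D.I D.π y) := by
        rw [← mul_assoc]; exact Set.mul_subset_mul_right (IwI_mul_subset D.π_surjective _ _)
    _ ⊆ _ := Set.mul_subset_mul_left (D.IwI_mul_IwI_subset_of_mem_Om_left hu y)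
    _ ⊆ _ := D.IwI_wordProd_mul_subset ω (u * y)
    _ ⊆ _ := Set.iUnion₂_subset fun ω' h => Set.subset_iUnion₂_of_subset _
          ⟨D.cs.wordProd ω', _, ⟨u, hu⟩, rfl, rfl, bruhatLE_wordProd_of_sublist hω h⟩
          (by rw [mul_assoc])

end IwahoriHeckeSetup

/-- For all `x, y ∈ W̃` one has `IxIyI ⊆ ⋃_{z ≤ y} IxzI` and `IxIyI ⊆ ⋃_{z ≤ x} IzyI`,
where the unions run over `z ∈ W̃` with `z ≤ y` (resp. `z ≤ x`) in the extended Bruhat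
order. -/
theorem IxIyI_subset_biUnion {G W B : Type} [Group G] [Group W]
    {M : CoxeterMatrix B} (D : IwahoriHeckeSetup G W B M) (x y : W) :
    IwI D.I D.π x * IwI D.I D.π y ⊆ ⋃ z ∈ {z : W | extBruhatLE D z y}, IwI D.I D.π (x * z) ∧
    IwI D.I D.π x * IwI D.I D.π y ⊆ ⋃ z ∈ {z : W | extBruhatLE D z x}, IwI D.I D.π (z * y) := by
  constructor
  · obtain ⟨ω, hω, u, hu, rfl⟩ := D.exists_isReduced_mul_mem_Om y
    exact D.IwI_mul_IwI_subset_biUnion_extBruhatLE_right x hω hu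
  · obtain ⟨ω, hω, u, hu, rfl⟩ := D.exists_isReduced_mul_mem_Om x
    exact D.IwI_mul_IwI_subset_biUnion_extBruhatLE_left hω hu y
end

section
/- For w, w' ∈ W̃ the following are equivalent: (i) i_w ⋆ i_{w'} = i_{ww'} in H(G,I); (ii) Iww'I = IwIw'I as subsets of G; (iii) ℓ(w) + ℓ(w') = ℓ(ww'); (iv) q_w·q_{w'} = q_{ww'}. -/
open scoped Pointwise

/-! The products of double cosets are governed by the Iwahori–Matsumoto relations
`IsI·IwI = IswI` if `ℓ(sw) = ℓ(w) + 1` and `IsI·IwI = IswI ∪ IwI` otherwise, which follow from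
(T3), (T4) and (T0), while the elements of `Ω` have length zero and their representatives
normalize `I`. Induction on `ℓ(w)` along left descents then gives `IwI·Iw'I = Iww'I` when the
lengths add up, and a second double coset inside `IwI·Iw'I` when they do not.

The multiplication map `(IwI/I) × (Iw'I/I) → G/I`, `(yI, zI) ↦ yzI` (computed on chosen
representatives), has image `IwI·Iw'I/I`, and its fibre over `xI` is in bijection with the nonzero
terms of `(i_w ⋆ i_{w'})(x)`. Hence `|IwI·Iw'I/I| ≤ q(w)·q(w')`, and `i_w ⋆ i_{w'} = i_{ww'}`
exactly when the map is a bijection onto `Iww'I/I`. For a simple reflection with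
`ℓ(sw) = ℓ(w) + 1` it is injective, which makes `q` multiplicative along reduced products. -/

section CosetCounting

open Set

variable {G : Type} [Group G] {I : Subgroup G}

lemma mem_leftCosetsIn_iff {A : Set G} (hA : A * I ⊆ A) {z : G ⧸ I} :
    z ∈ leftCosetsIn I A ↔ z.out ∈ A := by
  refine ⟨?_, fun h => ⟨z.out, h, QuotientGroup.out_eq' z⟩⟩
  rintro ⟨a, ha, rfl⟩
  obtain ⟨i, hi⟩ := QuotientGroup.mk_out_eq_mul I a
  exact hi ▸ hA (mul_mem_mul ha i.2)

lemma ncard_leftCosetsIn_singleton_mul (g : G) (A : Set G) :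
    (leftCosetsIn I ({g} * A)).ncard = (leftCosetsIn I A).ncard := by
  have hmk : (fun a => ((g * a : G) : G ⧸ I)) = (g • ·) ∘ ((↑) : G → G ⧸ I) :=
    funext fun a => (MulAction.Quotient.smul_mk I g a).symm
  rw [leftCosetsIn, leftCosetsIn, singleton_mul, image_image, hmk, image_comp,
    (MulAction.injective g).injOn.ncard_image]

variable (I) in
noncomputable def cosetMul (p : (G ⧸ I) × (G ⧸ I)) : G ⧸ I := (p.1.out * p.2.out : G)

lemma cosetMul_image {A A' : Set G} (hA : A * I ⊆ A) (hA'l : (I : Set G) * A' ⊆ A')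
    (hA'r : A' * I ⊆ A') :
    cosetMul I '' (leftCosetsIn I A ×ˢ leftCosetsIn I A') = leftCosetsIn I (A * A') := by
  ext z
  constructor
  · rintro ⟨⟨y, y'⟩, ⟨hy, hy'⟩, rfl⟩
    exact ⟨_, mul_mem_mul ((mem_leftCosetsIn_iff hA).1 hy) ((mem_leftCosetsIn_iff hA'r).1 hy'), rfl⟩
  · rintro ⟨_, ⟨a, ha, a', ha', rfl⟩, rfl⟩
    obtain ⟨i, hi⟩ := QuotientGroup.mk_out_eq_mul I a
    obtain ⟨j, hj⟩ := QuotientGroup.mk_out_eq_mul I ((i : G)⁻¹ * a')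
    refine ⟨(a, (i : G)⁻¹ * a'), ⟨⟨a, ha, rfl⟩, ⟨_, hA'l (mul_mem_mul (inv_mem i.2) ha'), rfl⟩⟩, ?_⟩
    simp only [cosetMul, hi, hj]
    rw [show a * i * ((i : G)⁻¹ * a' * j) = a * a' * j by group]
    exact QuotientGroup.mk_mul_of_mem _ j.2

lemma finite_leftCosetsIn_mul {A A' : Set G} (hA : A * I ⊆ A) (hA'l : (I : Set G) * A' ⊆ A')
    (hA'r : A' * I ⊆ A') (hfin : (leftCosetsIn I A).Finite) (hfin' : (leftCosetsIn I A').Finite) :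
    (leftCosetsIn I (A * A')).Finite :=
  cosetMul_image hA hA'l hA'r ▸ (hfin.prod hfin').image _

lemma ncard_leftCosetsIn_mul_le {A A' : Set G} (hA : A * I ⊆ A) (hA'l : (I : Set G) * A' ⊆ A')
    (hA'r : A' * I ⊆ A') (hfin : (leftCosetsIn I A).Finite) (hfin' : (leftCosetsIn I A').Finite) :
    (leftCosetsIn I (A * A')).ncard ≤ (leftCosetsIn I A).ncard * (leftCosetsIn I A').ncard := by
  rw [← cosetMul_image hA hA'l hA'r, ← ncard_prod]
  exact ncard_image_le (hfin.prod hfin')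

lemma ncard_leftCosetsIn_mul_eq_iff {A A' : Set G} (hA : A * I ⊆ A)
    (hA'l : (I : Set G) * A' ⊆ A') (hA'r : A' * I ⊆ A') (hfin : (leftCosetsIn I A).Finite)
    (hfin' : (leftCosetsIn I A').Finite) :
    (leftCosetsIn I (A * A')).ncard = (leftCosetsIn I A).ncard * (leftCosetsIn I A').ncard ↔
      InjOn (cosetMul I) (leftCosetsIn I A ×ˢ leftCosetsIn I A') := by
  rw [← cosetMul_image hA hA'l hA'r, ← ncard_prod]
  exact ⟨fun h => injOn_of_ncard_image_eq h (hfin.prod hfin'), InjOn.ncard_image⟩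

variable (I) in
def convCosets (A A' : Set G) (x : G) : Set (G ⧸ I) := {y | y.out ∈ A ∧ y.out⁻¹ * x ∈ A'}

lemma convCosets_subset (A A' : Set G) (x : G) : convCosets I A A' x ⊆ leftCosetsIn I A :=
  fun y hy => ⟨y.out, hy.1, QuotientGroup.out_eq' y⟩

lemma hconv_indicator_apply {A A' : Set G} (hfin : (leftCosetsIn I A).Finite) (x : G) :
    hconv I (A.indicator fun _ => 1) (A'.indicator fun _ => 1) x = (convCosets I A A' x).ncard := by
  have hterm : (fun y : G ⧸ I => A.indicator (fun _ => (1 : ℤ)) y.out *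
      A'.indicator (fun _ => 1) (y.out⁻¹ * x)) = (convCosets I A A' x).indicator fun _ => 1 := by
    ext y
    by_cases hy : y.out ∈ A <;> by_cases hy' : y.out⁻¹ * x ∈ A' <;>
      simp [convCosets, hy, hy']
  rw [hconv, hterm, ← finsum_mem_def, ← finsum_one,
    Nat.cast_finsum_mem ((hfin.subset (convCosets_subset A A' x)))]
  simp

lemma convCosets_nonempty_iff {A A' : Set G} (hA : A * I ⊆ A) (hA' : (I : Set G) * A' ⊆ A')
    (x : G) : (convCosets I A A' x).Nonempty ↔ x ∈ A * A' := by
  constructor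
  · rintro ⟨y, hy, hy'⟩
    exact ⟨y.out, hy, _, hy', mul_inv_cancel_left _ _⟩
  · rintro ⟨a, ha, a', ha', rfl⟩
    obtain ⟨i, hi⟩ := QuotientGroup.mk_out_eq_mul I a
    refine ⟨a, ?_, ?_⟩ <;> rw [hi]
    · exact hA (mul_mem_mul ha i.2)
    · rw [show (a * i)⁻¹ * (a * a') = (i : G)⁻¹ * a' by group]
      exact hA' (mul_mem_mul (inv_mem i.2) ha')

lemma convCosets_subsingleton {A A' : Set G}
    (hinj : InjOn (cosetMul I) (leftCosetsIn I A ×ˢ leftCosetsIn I A')) (x : G) :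
    (convCosets I A A' x).Subsingleton := by
  have hfactor : ∀ y ∈ convCosets I A A' x,
      (y, (y.out⁻¹ * x : G ⧸ I)) ∈ leftCosetsIn I A ×ˢ leftCosetsIn I A' ∧
        cosetMul I (y, (y.out⁻¹ * x : G ⧸ I)) = x := by
    intro y hy
    refine ⟨⟨convCosets_subset A A' x hy, _, hy.2, rfl⟩, ?_⟩
    obtain ⟨i, hi⟩ := QuotientGroup.mk_out_eq_mul I (y.out⁻¹ * x)
    simp only [cosetMul, hi, ← mul_assoc, mul_inv_cancel, one_mul]
    exact QuotientGroup.mk_mul_of_mem x i.2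
  intro y hy y' hy'
  exact congrArg Prod.fst (hinj (hfactor y hy).1 (hfactor y' hy').1
    ((hfactor y hy).2.trans (hfactor y' hy').2.symm))

lemma hconv_indicator_ne_zero_iff {A A' : Set G} (hA : A * I ⊆ A) (hA' : (I : Set G) * A' ⊆ A')
    (hfin : (leftCosetsIn I A).Finite) (x : G) :
    hconv I (A.indicator fun _ => 1) (A'.indicator fun _ => 1) x ≠ 0 ↔ x ∈ A * A' := by
  rw [hconv_indicator_apply hfin, Nat.cast_ne_zero, ← Nat.pos_iff_ne_zero,
    ncard_pos (hfin.subset (convCosets_subset A A' x)), convCosets_nonempty_iff hA hA']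

lemma hconv_indicator_eq_of_injOn {A A' : Set G} (hA : A * I ⊆ A) (hA' : (I : Set G) * A' ⊆ A')
    (hfin : (leftCosetsIn I A).Finite)
    (hinj : InjOn (cosetMul I) (leftCosetsIn I A ×ˢ leftCosetsIn I A')) :
    hconv I (A.indicator fun _ => 1) (A'.indicator fun _ => 1) = (A * A').indicator fun _ => 1 := by
  funext x
  rw [hconv_indicator_apply hfin]
  by_cases hx : x ∈ A * A'
  · obtain ⟨y, hy⟩ := (convCosets_nonempty_iff hA hA' x).2 hx
    rw [(convCosets_subsingleton hinj x).eq_singleton_of_mem hy, indicator_of_mem hx,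
      ncard_singleton, Nat.cast_one]
  · rw [indicator_of_notMem hx, Nat.cast_eq_zero,
      ncard_eq_zero (hfin.subset (convCosets_subset A A' x)), ← not_nonempty_iff_eq_empty,
      convCosets_nonempty_iff hA hA']
    exact hx

end CosetCounting

namespace IwahoriHeckeSetup

open Set

variable {G W B : Type} [Group G] [Group W] {M : CoxeterMatrix B}
variable (D : IwahoriHeckeSetup G W B M)

abbrev C (w : W) : Set G := IwI D.I D.π w

abbrev simple (b : B) : W := ((D.cs.simple b : D.Waff) : W)

noncomputable def rep (w : W) : D.N := Function.surjInv D.π_surjective w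

@[simp] lemma π_rep (w : W) : D.π (D.rep w) = w := Function.surjInv_eq D.π_surjective w

lemma mem_C_iff {w : W} {n : D.N} (hn : D.π n = w) {g : G} :
    g ∈ D.C w ↔ ∃ i ∈ D.I, ∃ j ∈ D.I, g = i * n * j := by
  constructor
  · rintro ⟨n', rfl, i, hi, j, hj, rfl⟩
    have hT : ((n⁻¹ * n' : D.N) : G) ∈ D.I := (D.π_ker _).1 (by simp [hn])
    exact ⟨i, hi, ((n⁻¹ * n' : D.N) : G) * j, mul_mem hT hj, by push_cast; group⟩
  · rintro ⟨i, hi, j, hj, rfl⟩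
    exact ⟨n, hn, i, hi, j, hj, rfl⟩

lemma rep_mem_C (w : W) : (D.rep w : G) ∈ D.C w :=
  ⟨D.rep w, D.π_rep w, 1, one_mem _, 1, one_mem _, by group⟩

lemma mul_mem_C_left {w : W} {i g : G} (hi : i ∈ D.I) (hg : g ∈ D.C w) : i * g ∈ D.C w := by
  obtain ⟨n, hn, a, ha, b, hb, rfl⟩ := hg
  exact ⟨n, hn, i * a, mul_mem hi ha, b, hb, by group⟩

lemma mul_mem_C_right {w : W} {g j : G} (hg : g ∈ D.C w) (hj : j ∈ D.I) : g * j ∈ D.C w := by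
  obtain ⟨n, hn, a, ha, b, hb, rfl⟩ := hg
  exact ⟨n, hn, a, ha, b * j, mul_mem hb hj, by group⟩

lemma C_eq_of_mem {w : W} {g : G} (hg : g ∈ D.C w) : D.C w = (D.I : Set G) * {g} * D.I := by
  ext x
  constructor
  · intro hx
    obtain ⟨i, hi, j, hj, rfl⟩ := (D.mem_C_iff (D.π_rep w)).1 hg
    obtain ⟨a, ha, b, hb, rfl⟩ := (D.mem_C_iff (D.π_rep w)).1 hx
    exact ⟨a * i⁻¹ * (i * D.rep w * j), ⟨a * i⁻¹, mul_mem ha (inv_mem hi), _, rfl, rfl⟩,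
      j⁻¹ * b, mul_mem (inv_mem hj) hb, by group⟩
  · rintro ⟨_, ⟨i, hi, _, rfl, rfl⟩, j, hj, rfl⟩
    exact D.mul_mem_C_right (D.mul_mem_C_left hi hg) hj

lemma I_mul_C (w : W) : (D.I : Set G) * D.C w = D.C w :=
  subset_antisymm (mul_subset_iff.2 fun _ hi _ hg => D.mul_mem_C_left hi hg)
    fun g hg => ⟨1, one_mem _, g, hg, one_mul g⟩

lemma C_mul_I (w : W) : D.C w * (D.I : Set G) = D.C w :=
  subset_antisymm (mul_subset_iff.2 fun _ hg _ hj => D.mul_mem_C_right hg hj)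
    fun g hg => ⟨g, hg, 1, one_mem _, mul_one g⟩

lemma C_one : D.C 1 = (D.I : Set G) := by
  ext g
  rw [D.mem_C_iff (map_one D.π)]
  constructor
  · rintro ⟨i, hi, j, hj, rfl⟩
    simpa using mul_mem hi hj
  · exact fun hg => ⟨g, hg, 1, one_mem _, by simp⟩

lemma C_inv (w : W) : D.C w⁻¹ = (D.C w)⁻¹ := by
  ext g
  rw [mem_inv, D.mem_C_iff (n := (D.rep w)⁻¹) (by simp), D.mem_C_iff (D.π_rep w)]
  constructor
  · rintro ⟨i, hi, j, hj, rfl⟩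
    exact ⟨j⁻¹, inv_mem hj, i⁻¹, inv_mem hi, by push_cast; group⟩
  · rintro ⟨i, hi, j, hj, h⟩
    exact ⟨j⁻¹, inv_mem hj, i⁻¹, inv_mem hi, by rw [← inv_inv g, h]; push_cast; group⟩

lemma C_mul_subset_C_mul_C (w w' : W) : D.C (w * w') ⊆ D.C w * D.C w' := by
  intro g hg
  obtain ⟨i, hi, j, hj, rfl⟩ := (D.mem_C_iff (n := D.rep w * D.rep w') (by simp)).1 hg
  exact ⟨i * D.rep w, D.mul_mem_C_left hi (D.rep_mem_C w),
    D.rep w' * j, D.mul_mem_C_right (D.rep_mem_C w') hj, by push_cast; group⟩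

lemma C_inv_mul_C_inv_of_C_mul_C {x y z : W} (h : D.C x * D.C y = D.C z) :
    D.C y⁻¹ * D.C x⁻¹ = D.C z⁻¹ := by
  rw [D.C_inv, D.C_inv, D.C_inv, ← mul_inv_rev, h]

lemma C_Om_mul {u : W} (hu : u ∈ D.Om) (w : W) :
    D.C (u * w) = {(D.rep u : G)} * D.C w := by
  have hconj : ∀ n : D.N, D.π n ∈ D.Om → ∀ i ∈ D.I, (n : G)⁻¹ * i * n ∈ D.I := fun n hn i hi => by
    simpa using D.TOm n⁻¹ (by simpa using inv_mem hn) i hi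
  ext g
  rw [D.mem_C_iff (n := D.rep u * D.rep w) (by simp), singleton_mul]
  constructor
  · rintro ⟨i, hi, j, hj, rfl⟩
    refine ⟨(D.rep u : G)⁻¹ * i * D.rep u * D.rep w * j, ?_, by push_cast; group⟩
    exact D.mul_mem_C_right (D.mul_mem_C_left (hconj _ (by simpa) i hi) (D.rep_mem_C w)) hj
  · rintro ⟨_, ha, rfl⟩
    obtain ⟨i, hi, j, hj, rfl⟩ := (D.mem_C_iff (D.π_rep w)).1 ha
    exact ⟨D.rep u * i * (D.rep u : G)⁻¹, D.TOm _ (by simpa) i hi, j, hj, by push_cast; group⟩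

lemma C_Om_mul_C {u : W} (hu : u ∈ D.Om) (w : W) : D.C u * D.C w = D.C (u * w) := by
  have hu1 : D.C u = {(D.rep u : G)} * D.I := by simpa [D.C_one] using D.C_Om_mul hu 1
  rw [hu1, mul_assoc, I_mul_C, D.C_Om_mul hu]

lemma C_mul_C_Om {u : W} (hu : u ∈ D.Om) (w : W) : D.C w * D.C u = D.C (w * u) := by
  simpa using D.C_inv_mul_C_inv_of_C_mul_C (D.C_Om_mul_C (inv_mem hu) w⁻¹)

lemma exists_Waff_mul_Om (w : W) : ∃ (a : D.Waff) (u : D.Om), w = a * u := by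
  obtain ⟨a, ha, u, hu, rfl⟩ := D.sd_prod w
  exact ⟨⟨a, ha⟩, ⟨u, hu⟩, rfl⟩

lemma len_Waff (a : D.Waff) : D.len a = D.cs.length a := by
  simpa using D.len_spec a 1

lemma len_of_mem_Om {u : W} (hu : u ∈ D.Om) : D.len u = 0 := by
  simpa using D.len_spec 1 ⟨u, hu⟩

lemma len_simple (b : B) : D.len (D.simple b) = 1 := by
  rw [len_Waff, CoxeterSystem.length_simple]

lemma length_conj_le {u : W} (hu : u ∈ D.Om) {a a' : D.Waff} (h : (a' : W) = u * a * u⁻¹) :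
    D.cs.length a' ≤ D.cs.length a := by
  choose f hf using D.TS u hu
  have hconj : ∀ ω : List B,
      ((D.cs.wordProd (ω.map f) : D.Waff) : W) = u * D.cs.wordProd ω * u⁻¹ := by
    intro ω
    induction ω with
    | nil => simp
    | cons b ω ih =>
      simp only [List.map_cons, CoxeterSystem.wordProd_cons, Subgroup.coe_mul, ih, ← hf b]
      group
  obtain ⟨ω, hω, rfl⟩ := D.cs.exists_isReduced a
  have ha' : a' = D.cs.wordProd (ω.map f) := Subtype.ext (h.trans (hconj ω).symm)
  rw [ha', hω.eq]
  simpa using D.cs.length_wordProd_le (ω.map f)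

lemma len_mul_le (x y : W) : D.len (x * y) ≤ D.len x + D.len y := by
  obtain ⟨a, u, rfl⟩ := D.exists_Waff_mul_Om x
  obtain ⟨b, v, rfl⟩ := D.exists_Waff_mul_Om y
  let b' : D.Waff := ⟨u * b * (u : W)⁻¹, D.Waff_normal.conj_mem _ b.2 u⟩
  have hxy : (a : W) * u * (b * v) = (a * b' : D.Waff) * (u * v : D.Om) := by
    simp only [b', Subgroup.coe_mul]; group
  rw [hxy, D.len_spec, D.len_spec, D.len_spec]
  calc D.cs.length (a * b') ≤ D.cs.length a + D.cs.length b' := D.cs.length_mul_le a b'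
    _ ≤ D.cs.length a + D.cs.length b := by gcongr; exact D.length_conj_le u.2 rfl

lemma len_Om_mul {u : W} (hu : u ∈ D.Om) (w : W) : D.len (u * w) = D.len w := by
  have h₁ := D.len_mul_le u w
  have h₂ := D.len_mul_le u⁻¹ (u * w)
  rw [inv_mul_cancel_left, D.len_of_mem_Om (inv_mem hu)] at h₂
  rw [D.len_of_mem_Om hu] at h₁
  omega

lemma len_inv_le (w : W) : D.len w⁻¹ ≤ D.len w := by
  obtain ⟨a, u, rfl⟩ := D.exists_Waff_mul_Om w
  have hinv : ((a : W) * u)⁻¹ = ((u⁻¹ : D.Om) : W) * (a⁻¹ : D.Waff) := by simp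
  rw [hinv, D.len_Om_mul (u⁻¹).2, len_Waff, D.cs.length_inv, D.len_spec]

lemma len_inv (w : W) : D.len w⁻¹ = D.len w :=
  le_antisymm (D.len_inv_le w) (by simpa using D.len_inv_le w⁻¹)

lemma len_simple_mul (b : B) (w : W) :
    D.len (D.simple b * w) = D.len w + 1 ∨ D.len (D.simple b * w) + 1 = D.len w := by
  obtain ⟨a, u, rfl⟩ := D.exists_Waff_mul_Om w
  rw [← mul_assoc, ← Subgroup.coe_mul, D.len_spec, D.len_spec]
  exact D.cs.length_simple_mul a b

lemma mem_Om_of_len_eq_zero {w : W} (hw : D.len w = 0) : w ∈ D.Om := by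
  obtain ⟨a, u, rfl⟩ := D.exists_Waff_mul_Om w
  rw [D.len_spec, CoxeterSystem.length_eq_zero_iff] at hw
  simp [hw]

lemma exists_len_simple_mul_add_one {w : W} (hw : D.len w ≠ 0) :
    ∃ b : B, D.len (D.simple b * w) + 1 = D.len w := by
  obtain ⟨a, u, rfl⟩ := D.exists_Waff_mul_Om w
  rw [D.len_spec, Ne, CoxeterSystem.length_eq_zero_iff] at hw
  obtain ⟨b, hb⟩ := D.cs.exists_leftDescent_of_ne_one hw
  refine ⟨b, ?_⟩
  rw [← mul_assoc, ← Subgroup.coe_mul, D.len_spec, D.len_spec]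
  exact D.cs.isLeftDescent_iff.1 hb

lemma simple_mul_self (b : B) : D.simple b * D.simple b = 1 := by
  simp [simple, ← Subgroup.coe_mul]

lemma simple_inv (b : B) : (D.simple b)⁻¹ = D.simple b :=
  inv_eq_of_mul_eq_one_right (D.simple_mul_self b)

lemma simple_mul_simple_cancel_left (b : B) (w : W) : D.simple b * (D.simple b * w) = w := by
  rw [← mul_assoc, simple_mul_self, one_mul]

lemma exists_len_mul_simple_add_one {w : W} (hw : D.len w ≠ 0) :
    ∃ b : B, D.len (w * D.simple b) + 1 = D.len w := by
  obtain ⟨b, hb⟩ := D.exists_len_simple_mul_add_one (w := w⁻¹) (by rwa [len_inv])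
  refine ⟨b, ?_⟩
  rwa [← D.simple_inv, ← mul_inv_rev, len_inv, len_inv] at hb

theorem induction_on_len {P : W → Prop} (Om : ∀ u ∈ D.Om, P u)
    (descent : ∀ b w, D.len (D.simple b * w) + 1 = D.len w → P (D.simple b * w) → P w)
    (w : W) : P w := by
  induction hn : D.len w using Nat.strong_induction_on generalizing w with
  | _ n ih =>
    rcases eq_or_ne n 0 with rfl | hn0
    · exact Om w (D.mem_Om_of_len_eq_zero hn)
    · obtain ⟨b, hb⟩ := D.exists_len_simple_mul_add_one (hn ▸ hn0)
      exact descent b w hb (ih _ (by omega) _ rfl)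

lemma len_add_of_len_simple_mul {b : B} {w w' : W} (hb : D.len (D.simple b * w) + 1 = D.len w)
    (h : D.len w + D.len w' = D.len (w * w')) :
    D.len (D.simple b * w) + D.len w' = D.len (D.simple b * w * w') ∧
      D.len (D.simple b * (D.simple b * w * w')) = D.len (D.simple b * w * w') + 1 := by
  have hs : D.simple b * (D.simple b * w * w') = w * w' := by
    rw [mul_assoc, simple_mul_simple_cancel_left]
  have h₁ := D.len_mul_le (D.simple b * w) w'
  have h₂ := D.len_mul_le (D.simple b) (D.simple b * w * w')
  rw [hs, len_simple] at h₂
  rw [hs]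
  omega

lemma C_simple_mul_C_subset (b : B) (w : W) :
    D.C (D.simple b) * D.C w ⊆ D.C w ∪ D.C (D.simple b * w) := by
  rintro _ ⟨g, hg, h, hh, rfl⟩
  obtain ⟨i, hi, j, hj, rfl⟩ := (D.mem_C_iff (D.π_rep _)).1 hg
  obtain ⟨a, ha, c, hc, rfl⟩ := (D.mem_C_iff (D.π_rep w)).1 hh
  have hassoc : i * D.rep (D.simple b) * j * (a * D.rep w * c) =
      i * (D.rep (D.simple b) * (j * a) * D.rep w) * c := by group
  show _ * _ ∈ _
  rw [hassoc]
  exact (D.T3 b w _ _ (D.π_rep _) (D.π_rep w) (j * a) (mul_mem hj ha)).imp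
    (fun h => D.mul_mem_C_right (D.mul_mem_C_left hi h) hc)
    (fun h => D.mul_mem_C_right (D.mul_mem_C_left hi h) hc)

lemma C_mul_C_simple_subset (b : B) (w : W) :
    D.C w * D.C (D.simple b) ⊆ D.C w ∪ D.C (w * D.simple b) := by
  have h := D.C_simple_mul_C_subset b w⁻¹
  rw [← D.simple_inv b, ← mul_inv_rev] at h
  simp only [C_inv] at h
  rwa [← mul_inv_rev, ← union_inv, inv_subset_inv] at h

lemma C_simple_mul_C_simple (b : B) :
    D.C (D.simple b) * D.C (D.simple b) = D.C 1 ∪ D.C (D.simple b) := by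
  have hsub : D.C (D.simple b) * D.C (D.simple b) ⊆ D.C 1 ∪ D.C (D.simple b) := by
    simpa [simple_mul_self, union_comm] using D.C_simple_mul_C_subset b (D.simple b)
  refine subset_antisymm hsub (union_subset ?_ ?_)
  · rw [← D.simple_mul_self b]
    exact D.C_mul_subset_C_mul_C _ _
  · set n : G := (D.rep (D.simple b) : G)
    obtain ⟨i, hi, hni⟩ : ∃ i ∈ D.I, n * i * n ∉ D.I := by
      simpa using D.T4 b _ _ (D.π_rep _) (D.π_rep _)
    have hprod : n * i * n ∈ D.C (D.simple b) * D.C (D.simple b) :=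
      ⟨n * i, D.mul_mem_C_right (D.rep_mem_C _) hi, n, D.rep_mem_C _, rfl⟩
    have hs : n * i * n ∈ D.C (D.simple b) :=
      (hsub hprod).resolve_left (by rwa [C_one])
    calc D.C (D.simple b) = D.I * {n * i * n} * D.I := D.C_eq_of_mem hs
      _ ⊆ D.I * (D.C (D.simple b) * D.C (D.simple b)) * D.I := by
        gcongr; exact singleton_subset_iff.2 hprod
      _ = D.C (D.simple b) * D.C (D.simple b) := by
        rw [← mul_assoc, I_mul_C, mul_assoc, C_mul_I]

theorem C_simple_mul_C_of_len_eq {b : B} {w : W} (h : D.len (D.simple b * w) = D.len w + 1) :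
    D.C (D.simple b) * D.C w = D.C (D.simple b * w) := by
  induction hn : D.len w generalizing w b with
  | zero => exact D.C_mul_C_Om (D.mem_Om_of_len_eq_zero hn) _
  | succ n ih =>
    -- Peel off a right descent `w = vt`; the relation for `v⁻¹` gives `IvI·ItI = IwI`, so
    -- `IsI·IwI ⊆ IsvI ∪ IswI`, and (T0) separates `IsvI` from `IwI`.
    obtain ⟨t, ht⟩ := D.exists_len_mul_simple_add_one (w := w) (by omega)
    set v := w * D.simple t
    have hvt : v * D.simple t = w := by simp [v, mul_assoc, simple_mul_self]
    have hv : D.len v = n := by omega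
    have hsv : D.len (D.simple b * v) = n + 1 := by
      have h₁ := D.len_mul_le (D.simple b) v
      have h₂ := D.len_mul_le (D.simple b * v) (D.simple t)
      rw [mul_assoc, hvt, h, len_simple] at h₂
      rw [len_simple] at h₁
      omega
    have hCv : D.C (D.simple b) * D.C v = D.C (D.simple b * v) := ih (by omega) hv
    have hCw : D.C v * D.C (D.simple t) = D.C w := by
      have hinv := ih (w := v⁻¹) (b := t)
        (by rw [← simple_inv, ← mul_inv_rev, hvt, len_inv, len_inv]; omega) (by rw [len_inv, hv])
      simpa [simple_inv, hvt] using D.C_inv_mul_C_inv_of_C_mul_C hinv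
    have hne : w ≠ D.simple b * v := fun hw => by
      rw [hw, simple_mul_simple_cancel_left] at h
      omega
    refine subset_antisymm (fun x hx => ?_) (D.C_mul_subset_C_mul_C _ _)
    have h₂ : x ∈ D.C (D.simple b * v) ∪ D.C (D.simple b * w) := by
      rw [← hCw, ← mul_assoc, hCv] at hx
      simpa [mul_assoc, hvt] using D.C_mul_C_simple_subset t _ hx
    rcases D.C_simple_mul_C_subset b w hx with h₁ | h₁
    · exact h₂.resolve_left (disjoint_left.1 (D.T0_disjoint _ _ hne) h₁)
    · exact h₁

lemma C_simple_mul_C_simple_mul {b : B} {w : W} (h : D.len (D.simple b * w) + 1 = D.len w) :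
    D.C (D.simple b) * D.C (D.simple b * w) = D.C w := by
  have h' := D.C_simple_mul_C_of_len_eq (w := D.simple b * w)
    (by rw [simple_mul_simple_cancel_left]; omega)
  rwa [simple_mul_simple_cancel_left] at h'

lemma C_simple_mul_C_of_len_add_one {b : B} {w : W} (h : D.len (D.simple b * w) + 1 = D.len w) :
    D.C (D.simple b) * D.C w = D.C (D.simple b * w) ∪ D.C w := by
  rw [← D.C_simple_mul_C_simple_mul h, ← mul_assoc, C_simple_mul_C_simple, union_mul,
    D.C_Om_mul_C (one_mem _), one_mul]

theorem C_mul_C_of_len_add {w w' : W} (h : D.len w + D.len w' = D.len (w * w')) :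
    D.C w * D.C w' = D.C (w * w') := by
  induction w using D.induction_on_len generalizing w' with
  | Om u hu => exact D.C_Om_mul_C hu w'
  | descent b w hb ih =>
    obtain ⟨h₁, h₂⟩ := D.len_add_of_len_simple_mul hb h
    calc D.C w * D.C w' = D.C (D.simple b) * (D.C (D.simple b * w) * D.C w') := by
          rw [← mul_assoc, D.C_simple_mul_C_simple_mul hb]
      _ = D.C (D.simple b * (D.simple b * w * w')) := by
          rw [ih h₁, D.C_simple_mul_C_of_len_eq h₂]
      _ = D.C (w * w') := by rw [← mul_assoc, simple_mul_simple_cancel_left]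

theorem exists_C_subset_C_mul_C_of_len_lt {w w' : W} (h : D.len (w * w') < D.len w + D.len w') :
    ∃ x ≠ w * w', D.C x ⊆ D.C w * D.C w' := by
  induction w using D.induction_on_len generalizing w' with
  | Om u hu =>
    rw [D.len_Om_mul hu, D.len_of_mem_Om hu] at h
    omega
  | descent b w hb ih =>
    have hw : D.C w = D.C (D.simple b) * D.C (D.simple b * w) :=
      (D.C_simple_mul_C_simple_mul hb).symm
    have hsww' : D.simple b * (D.simple b * w * w') = w * w' := by
      rw [← mul_assoc, simple_mul_simple_cancel_left]
    by_cases hadd : D.len (D.simple b * w) + D.len w' = D.len (D.simple b * w * w')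
    · have hdesc :
          D.len (D.simple b * (D.simple b * w * w')) + 1 = D.len (D.simple b * w * w') := by
        have := D.len_simple_mul b (D.simple b * w * w')
        rw [hsww'] at this ⊢
        omega
      refine ⟨D.simple b * w * w', fun heq => ?_, ?_⟩
      · rw [hsww', heq] at hdesc
        omega
      · calc D.C (D.simple b * w * w')
            ⊆ D.C (D.simple b) * D.C (D.simple b * w * w') := by
              rw [D.C_simple_mul_C_of_len_add_one hdesc]; exact subset_union_right
          _ = D.C w * D.C w' := by rw [← D.C_mul_C_of_len_add hadd, ← mul_assoc, ← hw]
    · obtain ⟨x, hx, hsub⟩ := ih (lt_of_le_of_ne (D.len_mul_le _ _) (Ne.symm hadd))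
      refine ⟨D.simple b * x, fun heq => hx ?_, ?_⟩
      · rw [← D.simple_mul_simple_cancel_left b x, heq, mul_assoc]
      · calc D.C (D.simple b * x) ⊆ D.C (D.simple b) * D.C x := D.C_mul_subset_C_mul_C _ _
          _ ⊆ D.C (D.simple b) * (D.C (D.simple b * w) * D.C w') := by gcongr
          _ = D.C w * D.C w' := by rw [← mul_assoc, ← hw]

theorem C_mul_eq_C_mul_C_iff (w w' : W) :
    D.C (w * w') = D.C w * D.C w' ↔ D.len w + D.len w' = D.len (w * w') := by
  refine ⟨fun h => ?_, fun h => (D.C_mul_C_of_len_add h).symm⟩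
  by_contra hne
  obtain ⟨x, hx, hsub⟩ :=
    D.exists_C_subset_C_mul_C_of_len_lt (lt_of_le_of_ne (D.len_mul_le w w') (Ne.symm hne))
  have hxC : (D.rep x : G) ∈ D.C (w * w') := by rw [h]; exact hsub (D.rep_mem_C x)
  exact disjoint_left.1 (D.T0_disjoint x _ hx) (D.rep_mem_C x) hxC

lemma mem_leftCosetsIn_C_iff {w : W} {z : G ⧸ D.I} :
    z ∈ leftCosetsIn D.I (D.C w) ↔ z.out ∈ D.C w :=
  mem_leftCosetsIn_iff (D.C_mul_I w).le

lemma finite_leftCosetsIn_C (w : W) : (leftCosetsIn D.I (D.C w)).Finite := (D.TF w).1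

lemma q_eq (w : W) : D.q w = (leftCosetsIn D.I (D.C w)).ncard := (D.TF w).2

lemma q_pos (w : W) : 0 < D.q w := by
  rw [q_eq, ncard_pos (D.finite_leftCosetsIn_C w)]
  exact ⟨_, D.rep w, D.rep_mem_C w, rfl⟩

lemma q_Om_mul {u : W} (hu : u ∈ D.Om) (w : W) : D.q (u * w) = D.q w := by
  rw [q_eq, q_eq, D.C_Om_mul hu, ncard_leftCosetsIn_singleton_mul]

lemma q_of_mem_Om {u : W} (hu : u ∈ D.Om) : D.q u = 1 := by
  have hI : leftCosetsIn D.I (D.I : Set G) = {((1 : G) : G ⧸ D.I)} := by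
    refine eq_singleton_iff_unique_mem.2 ⟨⟨1, one_mem _, rfl⟩, ?_⟩
    rintro _ ⟨a, ha, rfl⟩
    simpa using QuotientGroup.mk_mul_of_mem 1 ha
  rw [← mul_one u, D.q_Om_mul hu, q_eq, C_one, hI, ncard_singleton]

/-- Two factorizations `yz ∈ y'z'I` have `y'⁻¹y ∈ IsI·IsI = I ∪ IsI`; the second case would put
`z' ∈ IwI` into `IsI·IwI = IswI`, which (T0) forbids. -/
lemma injOn_cosetMul_C_simple {b : B} {w : W} (h : D.len (D.simple b * w) = D.len w + 1) :
    InjOn (cosetMul D.I) (leftCosetsIn D.I (D.C (D.simple b)) ×ˢ leftCosetsIn D.I (D.C w)) := by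
  rintro ⟨y, z⟩ ⟨hy, hz⟩ ⟨y', z'⟩ ⟨hy', hz'⟩ heq
  simp only [mem_leftCosetsIn_C_iff] at hy hz hy' hz'
  have hk : (y.out * z.out)⁻¹ * (y'.out * z'.out) ∈ D.I := QuotientGroup.eq.1 heq
  have hyy : y'.out⁻¹ * y.out ∈ D.C 1 ∪ D.C (D.simple b) := by
    rw [← C_simple_mul_C_simple]
    refine mul_mem_mul ?_ hy
    rw [← simple_inv, C_inv, inv_mem_inv]
    exact hy'
  rcases hyy with hyy | hyy
  · rw [C_one] at hyy
    have hy_eq : y' = y := by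
      rw [← QuotientGroup.out_eq' y, ← QuotientGroup.out_eq' y']
      exact QuotientGroup.eq.2 hyy
    subst hy_eq
    rw [show (y'.out * z.out)⁻¹ * (y'.out * z'.out) = z.out⁻¹ * z'.out by group] at hk
    have hz_eq : z = z' := by
      rw [← QuotientGroup.out_eq' z, ← QuotientGroup.out_eq' z']
      exact QuotientGroup.eq.2 hk
    rw [hz_eq]
  · have hz's : z'.out ∈ D.C (D.simple b * w) := by
      rw [← D.C_simple_mul_C_of_len_eq h]
      refine ⟨_, hyy, _, D.mul_mem_C_right hz hk, by group⟩
    have hne : w ≠ D.simple b * w := fun hw => by rw [← hw] at h; omega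
    exact absurd hz's (disjoint_left.1 (D.T0_disjoint _ _ hne) hz')

lemma q_simple_mul {b : B} {w : W} (h : D.len (D.simple b * w) = D.len w + 1) :
    D.q (D.simple b * w) = D.q (D.simple b) * D.q w := by
  rw [q_eq, q_eq, q_eq, ← D.C_simple_mul_C_of_len_eq h]
  exact (ncard_leftCosetsIn_mul_eq_iff (D.C_mul_I _).le (D.I_mul_C w).le (D.C_mul_I w).le
    (D.finite_leftCosetsIn_C _) (D.finite_leftCosetsIn_C w)).2 (D.injOn_cosetMul_C_simple h)

theorem q_mul_of_len_add {w w' : W} (h : D.len w + D.len w' = D.len (w * w')) :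
    D.q w * D.q w' = D.q (w * w') := by
  induction w using D.induction_on_len generalizing w' with
  | Om u hu => rw [D.q_of_mem_Om hu, one_mul, D.q_Om_mul hu]
  | descent b w hb ih =>
    obtain ⟨h₁, h₂⟩ := D.len_add_of_len_simple_mul hb h
    have hw : D.q w = D.q (D.simple b) * D.q (D.simple b * w) := by
      have hsw := D.q_simple_mul (w := D.simple b * w)
        (by rw [simple_mul_simple_cancel_left]; omega)
      rwa [simple_mul_simple_cancel_left] at hsw
    calc D.q w * D.q w' = D.q (D.simple b) * D.q (D.simple b * w * w') := by
          rw [hw, mul_assoc, ih h₁]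
      _ = D.q (w * w') := by
          rw [← D.q_simple_mul h₂, ← mul_assoc, simple_mul_simple_cancel_left]

/-- A second double coset `IxI ⊆ IwI·Iw'I` makes `IwI·Iw'I` contain more than `q(ww')` cosets,
while it never contains more than `q(w)·q(w')`. -/
theorem len_add_of_q_mul {w w' : W} (h : D.q w * D.q w' = D.q (w * w')) :
    D.len w + D.len w' = D.len (w * w') := by
  by_contra hne
  obtain ⟨x, hx, hsub⟩ :=
    D.exists_C_subset_C_mul_C_of_len_lt (lt_of_le_of_ne (D.len_mul_le w w') (Ne.symm hne))
  have hdisj : Disjoint (leftCosetsIn D.I (D.C (w * w'))) (leftCosetsIn D.I (D.C x)) := by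
    refine disjoint_left.2 fun z hz hz' => ?_
    rw [mem_leftCosetsIn_C_iff] at hz hz'
    exact disjoint_left.1 (D.T0_disjoint _ _ (Ne.symm hx)) hz hz'
  have hcount : D.q (w * w') + D.q x ≤ D.q w * D.q w' := by
    rw [q_eq, q_eq, q_eq, q_eq, ← ncard_union_eq hdisj (D.finite_leftCosetsIn_C _)
      (D.finite_leftCosetsIn_C x)]
    refine le_trans (ncard_le_ncard ?_ ?_) (ncard_leftCosetsIn_mul_le (D.C_mul_I w).le
      (D.I_mul_C w').le (D.C_mul_I w').le (D.finite_leftCosetsIn_C w) (D.finite_leftCosetsIn_C w'))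
    · exact union_subset (image_mono (D.C_mul_subset_C_mul_C w w')) (image_mono hsub)
    · exact finite_leftCosetsIn_mul (D.C_mul_I w).le (D.I_mul_C w').le (D.C_mul_I w').le
        (D.finite_leftCosetsIn_C w) (D.finite_leftCosetsIn_C w')
  have := D.q_pos x
  omega

end IwahoriHeckeSetup

/-- For `w, w' ∈ W̃` the following are equivalent:
(i) `i_w ⋆ i_{w'} = i_{ww'}` in `H(G,I)`;
(ii) `Iww'I = IwIw'I (= IwI·Iw'I)` as subsets of `G`;
(iii) `ℓ(w) + ℓ(w') = ℓ(ww')`;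
(iv) `q_w·q_{w'} = q_{ww'}`. -/
theorem hconv_iw_tfae {G W B : Type} [Group G] [Group W]
    {M : CoxeterMatrix B} (D : IwahoriHeckeSetup G W B M) (w w' : W) :
    (hconv D.I (iw D.I D.π w) (iw D.I D.π w') = iw D.I D.π (w * w') ↔
        IwI D.I D.π (w * w') = IwI D.I D.π w * IwI D.I D.π w') ∧
    (IwI D.I D.π (w * w') = IwI D.I D.π w * IwI D.I D.π w' ↔
        D.len w + D.len w' = D.len (w * w')) ∧
    (D.len w + D.len w' = D.len (w * w') ↔ D.q w * D.q w' = D.q (w * w')) := by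
  have h23 := D.C_mul_eq_C_mul_C_iff w w'
  have h34 : D.len w + D.len w' = D.len (w * w') ↔ D.q w * D.q w' = D.q (w * w') :=
    ⟨D.q_mul_of_len_add, D.len_add_of_q_mul⟩
  have hA := (D.C_mul_I w).le
  have hA' := (D.I_mul_C w').le
  refine ⟨⟨fun h => ?_, fun h => ?_⟩, h23, h34⟩
  · ext x
    rw [← hconv_indicator_ne_zero_iff hA hA' (D.finite_leftCosetsIn_C w) x]
    change _ ↔ hconv D.I (iw D.I D.π w) (iw D.I D.π w') x ≠ 0
    rw [h]
    simp [iw]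
  · have hinj := (ncard_leftCosetsIn_mul_eq_iff hA hA' (D.C_mul_I w').le
      (D.finite_leftCosetsIn_C w) (D.finite_leftCosetsIn_C w')).1
      (by rw [← h, ← D.q_eq, ← D.q_eq, ← D.q_eq, h34.1 (h23.1 h)])
    rw [iw, iw, hconv_indicator_eq_of_injOn hA hA' (D.finite_leftCosetsIn_C w) hinj, ← h]
    rfl
end
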